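/- arXiv:cs/0205007 — 6 statements merged into one kernel-verified Lean document; each statement's English description precedes it below -/
import Mathlib

section
/- For every cache size k ≥ 1 and every request sequence s, the optimal offline cost satisfies Opt(s) ≤ new(s), where new(s) is the total number of new requests in s. -/
/-!
Paging: Opt(s) ≤ new(s).
A request sequence is a `List U`; a schedule is a list of caches (Finsets of size ≤ k,
each containing the corresponding request); its cost is the number of evictions.
Phases partition the sequence into maximal consecutive blocks with ≤ k distinct items;
a request is *new* if its item was requested neither earlier in its phase nor in the
previous phase.
-/

namespace Paging

variable {U : Type*} [DecidableEq U]

/-- One step of the phase partition: append `x` to the current phase if it keeps at most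
`k` distinct items, otherwise close the current phase and start a new one with `x`. -/
def phaseStep (k : ℕ) (acc : List (List U) × List U) (x : U) : List (List U) × List U :=
  if (insert x acc.2.toFinset).card ≤ k then (acc.1, acc.2 ++ [x]) else (acc.1 ++ [acc.2], [x])

/-- The list of phases of a request sequence `s` (for cache size `k`). -/
def phases (k : ℕ) (s : List U) : List (List U) :=
  let r := s.foldl (phaseStep k) ([], [])
  if r.2 = [] then r.1 else r.1 ++ [r.2]

/-- The number of new requests in a phase, processed left to right: `prev` is the previous
phase, `seen` the part of the current phase already processed, and the last argument the
remaining requests of the current phase. -/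
def newInPhaseAux (prev : List U) : List U → List U → ℕ
  | _, [] => 0
  | seen, x :: rest =>
      (if x ∈ prev ∨ x ∈ seen then 0 else 1) + newInPhaseAux prev (x :: seen) rest

/-- `newCount k s` is the total number of new requests in `s`: sum over the phases of `s`
of the number of new requests of each phase (the "previous phase" of the first phase is
empty). -/
def newCount (k : ℕ) (s : List U) : ℕ :=
  ((([] : List U) :: phases k s).zip (phases k s)).foldl
    (fun a p => a + newInPhaseAux p.1 [] p.2) 0

/-- `S` is a schedule for `s` with cache size `k`. -/
def IsSchedule (k : ℕ) (s : List U) (S : List (Finset U)) : Prop :=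
  S.length = s.length ∧ ∀ p ∈ s.zip S, p.1 ∈ p.2 ∧ p.2.card ≤ k

/-- The cost of a schedule: the total number of evictions (an item is evicted at time `t`
if it is in `S_{t-1}` but not in `S_t`). -/
def schedCost (S : List (Finset U)) : ℕ :=
  ((S.zip S.tail).map fun p => (p.1 \ p.2).card).sum

/-- The optimal (offline) cost of serving `s` with cache size `k`. -/
noncomputable def optCost (k : ℕ) (s : List U) : ℕ :=
  sInf (schedCost '' {S | IsSchedule k s S})

/-! ### Auxiliary development -/

/-- Items of the remainder of the current phase (including `seen`). -/
def phSet (k : ℕ) : Finset U → List U → Finset U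
  | seen, [] => seen
  | seen, x :: r => if (insert x seen).card ≤ k then phSet k (insert x seen) r else seen

/-- Direct recursive count of new requests. -/
def M (k : ℕ) : Finset U → Finset U → List U → ℕ
  | _, _, [] => 0
  | prev, seen, x :: r =>
      if (insert x seen).card ≤ k then
        (if x ∈ prev ∨ x ∈ seen then 0 else 1) + M k prev (insert x seen) r
      else 1 + M k seen {x} r

/-- Sum of new requests over a list of phases, given the previous phase. -/
def g : List U → List (List U) → ℕ
  | _, [] => 0
  | prev, p :: ps => newInPhaseAux prev [] p + g p ps

lemma subset_phSet (k : ℕ) : ∀ (r : List U) (seen : Finset U), seen ⊆ phSet k seen r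
  | [], _ => subset_rfl
  | x :: r, seen => by
      rw [phSet]
      split
      · exact (Finset.subset_insert _ _).trans (subset_phSet k r _)
      · exact subset_rfl

lemma card_phSet (k : ℕ) : ∀ (r : List U) (seen : Finset U), seen.card ≤ k →
    (phSet k seen r).card ≤ k
  | [], _, h => h
  | x :: r, seen, h => by
      rw [phSet]
      split_ifs with h1
      · exact card_phSet k r _ h1
      · exact h

lemma cache_step (k : ℕ) (C T P : Finset U) (x : U) (hC : C.card ≤ k) (hTP : T ⊆ P)
    (hP : P.card ≤ k) (hxT : x ∈ T) (hTC : T.erase x ⊆ C) :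
    ∃ C' : Finset U, C'.card ≤ k ∧ T ⊆ C' ∧ (C \ C').card ≤ 1 ∧ (x ∈ C → C' = C) := by
  by_cases hxC : x ∈ C
  · refine ⟨C, hC, ?_, by simp, fun _ => rfl⟩
    intro z hz
    rcases eq_or_ne z x with rfl | h
    · exact hxC
    · exact hTC (Finset.mem_erase.mpr ⟨h, hz⟩)
  by_cases hlt : C.card < k
  · refine ⟨insert x C, (Finset.card_insert_le _ _).trans hlt, ?_, ?_, fun h => absurd h hxC⟩
    · intro z hz
      rcases eq_or_ne z x with rfl | h
      · exact Finset.mem_insert_self _ _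
      · exact Finset.mem_insert_of_mem (hTC (Finset.mem_erase.mpr ⟨h, hz⟩))
    · have : C \ insert x C = ∅ := Finset.sdiff_eq_empty_iff_subset.mpr (Finset.subset_insert _ _)
      simp [this]
  · have hCk : C.card = k := le_antisymm hC (not_lt.mp hlt)
    have hPx : x ∈ P := hTP hxT
    have hns : ¬ C ⊆ P.erase x := by
      intro hsub
      have h1 := Finset.card_le_card hsub
      have h2 : 1 ≤ P.card := Finset.card_pos.mpr ⟨x, hPx⟩
      rw [Finset.card_erase_of_mem hPx] at h1
      omega
    obtain ⟨y, hyC, hyP⟩ := Finset.not_subset.mp hns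
    have hyx : y ≠ x := fun h => hxC (h ▸ hyC)
    have hyT : y ∉ T := fun h => hyP (Finset.mem_erase.mpr ⟨hyx, hTP h⟩)
    refine ⟨insert x (C.erase y), ?_, ?_, ?_, fun h => absurd h hxC⟩
    · have h2 : 1 ≤ C.card := Finset.card_pos.mpr ⟨y, hyC⟩
      have := Finset.card_insert_le x (C.erase y)
      rw [Finset.card_erase_of_mem hyC] at this
      exact this.trans (by omega)
    · intro z hz
      rcases eq_or_ne z x with rfl | h
      · exact Finset.mem_insert_self _ _
      · refine Finset.mem_insert_of_mem (Finset.mem_erase.mpr ⟨?_, hTC (Finset.mem_erase.mpr ⟨h, hz⟩)⟩)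
        exact fun hzy => hyT (hzy ▸ hz)
    · have hsub : C \ insert x (C.erase y) ⊆ {y} := by
        intro z hz
        simp only [Finset.mem_sdiff, Finset.mem_insert, Finset.mem_erase, not_or, not_and] at hz
        simp only [Finset.mem_singleton]
        by_contra hzy
        exact hz.2.2 hzy hz.1
      exact (Finset.card_le_card hsub).trans (by simp)

lemma schedCost_cons_cons (a b : Finset U) (l : List (Finset U)) :
    schedCost (a :: b :: l) = (a \ b).card + schedCost (b :: l) := by
  simp [schedCost]

lemma sched_aux (k : ℕ) :
    ∀ (r : List U) (prev seen C : Finset U), seen ⊆ C → C.card ≤ k → 1 ≤ k →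
      prev ∩ phSet k seen r ⊆ C →
      ∃ S : List (Finset U), S.length = r.length ∧
        (∀ p ∈ r.zip S, p.1 ∈ p.2 ∧ p.2.card ≤ k) ∧
        schedCost (C :: S) ≤ M k prev seen r := by
  intro r
  induction r with
  | nil =>
      intro prev seen C _ _ _ _
      exact ⟨[], rfl, by simp, by simp [schedCost, M]⟩
  | cons x r ih =>
      intro prev seen C hsC hCk hk hprev
      by_cases hph : (insert x seen).card ≤ k
      · -- same phase
        have hphSet : phSet k seen (x :: r) = phSet k (insert x seen) r := by
          rw [phSet, if_pos hph]
        rw [hphSet] at hprev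
        by_cases hnew : x ∈ prev ∨ x ∈ seen
        · have hxC : x ∈ C := by
            rcases hnew with h | h
            · exact hprev (Finset.mem_inter.mpr
                ⟨h, subset_phSet k r _ (Finset.mem_insert_self x seen)⟩)
            · exact hsC h
          obtain ⟨S, hlen, hmem, hcost⟩ :=
            ih prev (insert x seen) C (Finset.insert_subset hxC hsC) hCk hk hprev
          refine ⟨C :: S, by simp [hlen], ?_, ?_⟩
          · intro p hp
            simp only [List.zip_cons_cons, List.mem_cons] at hp
            rcases hp with rfl | hp
            · exact ⟨hxC, hCk⟩
            · exact hmem _ hp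
          · rw [schedCost_cons_cons, M, if_pos hph, if_pos hnew]
            simpa using hcost
        · -- new request
          set P := phSet k (insert x seen) r with hP
          have hxP : x ∈ P := subset_phSet k r _ (Finset.mem_insert_self _ _)
          set T := insert x (seen ∪ (prev ∩ P)) with hT
          have hTP : T ⊆ P := by
            refine Finset.insert_subset hxP (Finset.union_subset ?_ Finset.inter_subset_right)
            exact (Finset.subset_insert x seen).trans (subset_phSet k r _)
          have hPk : P.card ≤ k := card_phSet k r _ hph
          have hTC : T.erase x ⊆ C :=
            (Finset.erase_insert_subset _ _).trans (Finset.union_subset hsC hprev)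
          obtain ⟨C', hC'k, hTC', hcost1, _⟩ :=
            cache_step k C T P x hCk hTP hPk (Finset.mem_insert_self _ _) hTC
          have hsC' : insert x seen ⊆ C' :=
            (Finset.insert_subset_insert x Finset.subset_union_left).trans hTC'
          have hprev'' : prev ∩ P ⊆ C' := fun z hz =>
            hTC' (Finset.mem_insert_of_mem (Finset.mem_union_right _ hz))
          obtain ⟨S, hlen, hmem, hcost⟩ := ih prev (insert x seen) C' hsC' hC'k hk hprev''
          refine ⟨C' :: S, by simp [hlen], ?_, ?_⟩
          · intro p hp
            simp only [List.zip_cons_cons, List.mem_cons] at hp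
            rcases hp with rfl | hp
            · exact ⟨hTC' (Finset.mem_insert_self _ _), hC'k⟩
            · exact hmem _ hp
          · rw [schedCost_cons_cons, M, if_pos hph, if_neg hnew]
            omega
      · -- phase boundary
        set Q := phSet k {x} r with hQ
        have hxQ : x ∈ Q := subset_phSet k r {x} (Finset.mem_singleton_self x)
        have hQk : Q.card ≤ k := card_phSet k r {x} (by simpa using hk)
        set T := insert x (seen ∩ Q) with hT
        have hTP : T ⊆ insert x Q :=
          Finset.insert_subset_insert x Finset.inter_subset_right
        have hPk : (insert x Q).card ≤ k := by
          rw [Finset.insert_eq_self.mpr hxQ]; exact hQk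
        have hTC : T.erase x ⊆ C :=
          (Finset.erase_insert_subset _ _).trans (Finset.inter_subset_left.trans hsC)
        obtain ⟨C', hC'k, hTC', hcost1, _⟩ :=
          cache_step k C T (insert x Q) x hCk hTP hPk (Finset.mem_insert_self _ _) hTC
        have hxC' : x ∈ C' := hTC' (Finset.mem_insert_self _ _)
        obtain ⟨S, hlen, hmem, hcost⟩ :=
          ih seen {x} C' (Finset.singleton_subset_iff.mpr hxC') hC'k hk
            (fun z hz => hTC' (Finset.mem_insert_of_mem hz))
        refine ⟨C' :: S, by simp [hlen], ?_, ?_⟩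
        · intro p hp
          simp only [List.zip_cons_cons, List.mem_cons] at hp
          rcases hp with rfl | hp
          · exact ⟨hxC', hC'k⟩
          · exact hmem _ hp
        · rw [schedCost_cons_cons, M, if_neg hph]
          omega

lemma newInPhaseAux_append (prev : List U) (x : U) (a : List U) : ∀ (seen : List U),
    newInPhaseAux prev seen (a ++ [x])
      = newInPhaseAux prev seen a + (if x ∈ prev ∨ x ∈ a ∨ x ∈ seen then 0 else 1) := by
  induction a with
  | nil => intro seen; simp [newInPhaseAux]
  | cons z a ih =>
      intro seen
      simp only [List.cons_append, newInPhaseAux, List.append_eq]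
      have hrec := ih (z :: seen)
      rw [hrec]
      have : (x ∈ prev ∨ x ∈ a ∨ x ∈ z :: seen) ↔ (x ∈ prev ∨ x ∈ z :: a ∨ x ∈ seen) := by
        simp only [List.mem_cons]; tauto
      rw [if_congr this rfl rfl]
      omega

lemma foldl_phaseStep_fst (k : ℕ) : ∀ (r : List U) (done : List (List U)) (cur : List U),
    List.foldl (phaseStep k) (done, cur) r
      = (done ++ (List.foldl (phaseStep k) ([], cur) r).1,
         (List.foldl (phaseStep k) ([], cur) r).2)
  | [], done, cur => by simp
  | x :: r, done, cur => by
      by_cases h : (insert x cur.toFinset).card ≤ k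
      · have e1 : phaseStep k (done, cur) x = (done, cur ++ [x]) := by simp [phaseStep, h]
        have e2 : phaseStep k (([] : List (List U)), cur) x = ([], cur ++ [x]) := by
          simp [phaseStep, h]
        rw [List.foldl_cons, List.foldl_cons, e1, e2, foldl_phaseStep_fst k r done (cur ++ [x])]
      · have e1 : phaseStep k (done, cur) x = (done ++ [cur], [x]) := by simp [phaseStep, h]
        have e2 : phaseStep k (([] : List (List U)), cur) x = ([cur], [x]) := by
          simp [phaseStep, h]
        rw [List.foldl_cons, List.foldl_cons, e1, e2,
          foldl_phaseStep_fst k r (done ++ [cur]) [x], foldl_phaseStep_fst k r [cur] [x]]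
        simp

lemma g_eq (k : ℕ) (hk : 1 ≤ k) : ∀ (r : List U) (prev cur : List U), cur.toFinset.card ≤ k →
    g prev ((List.foldl (phaseStep k) ([], cur) r).1 ++ [(List.foldl (phaseStep k) ([], cur) r).2])
      = newInPhaseAux prev [] cur + M k prev.toFinset cur.toFinset r
  | [], prev, cur, _ => by simp [g, M]
  | x :: r, prev, cur, hcard => by
      by_cases h : (insert x cur.toFinset).card ≤ k
      · have e2 : phaseStep k (([] : List (List U)), cur) x = ([], cur ++ [x]) := by
          simp [phaseStep, h]
        rw [List.foldl_cons, e2, g_eq k hk r prev (cur ++ [x]) (by rw [List.toFinset_append]; simpa using h)]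
        rw [newInPhaseAux_append, M, List.toFinset_append]
        have hset : cur.toFinset ∪ [x].toFinset = insert x cur.toFinset := by
          simp
        rw [hset, if_pos h]
        have hiff : (x ∈ prev ∨ x ∈ cur ∨ x ∈ ([] : List U))
            ↔ (x ∈ prev.toFinset ∨ x ∈ cur.toFinset) := by simp
        rw [if_congr hiff rfl rfl]
        omega
      · have e2 : phaseStep k (([] : List (List U)), cur) x = ([cur], [x]) := by
          simp [phaseStep, h]
        have hxcur : x ∉ cur := by
          intro hx
          rw [Finset.insert_eq_self.mpr (List.mem_toFinset.mpr hx)] at h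
          exact h hcard
        rw [List.foldl_cons, e2, foldl_phaseStep_fst k r [cur] [x]]
        have hrw : ([cur] ++ (List.foldl (phaseStep k) ([], [x]) r).1)
              ++ [(List.foldl (phaseStep k) ([], [x]) r).2]
            = cur :: ((List.foldl (phaseStep k) ([], [x]) r).1
              ++ [(List.foldl (phaseStep k) ([], [x]) r).2]) := by simp
        rw [hrw]
        show newInPhaseAux prev [] cur
            + g cur ((List.foldl (phaseStep k) ([], [x]) r).1
              ++ [(List.foldl (phaseStep k) ([], [x]) r).2]) = _
        rw [g_eq k hk r cur [x] (by simpa using hk)]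
        rw [M, if_neg h]
        have : newInPhaseAux cur [] [x] = 1 := by
          simp [newInPhaseAux, hxcur]
        rw [this]
        simp only [List.toFinset_cons, List.toFinset_nil, insert_empty_eq]

lemma foldl_zip (ps : List (List U)) : ∀ (prev : List U) (a : ℕ),
    List.foldl (fun a p => a + newInPhaseAux p.1 [] p.2) a ((prev :: ps).zip ps)
      = a + g prev ps := by
  induction ps with
  | nil => intro prev a; simp [g]
  | cons q qs ihq =>
      intro prev a
      simp only [List.zip_cons_cons, List.foldl_cons, g]
      rw [ihq q]
      omega

/-- for every cache size `k ≥ 1` and every request sequence `s`,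
`Opt(s) ≤ new(s)`. -/
theorem opt_le_newCount (k : ℕ) (hk : 1 ≤ k) (s : List U) :
    optCost k s ≤ newCount k s := by
  cases s with
  | nil =>
      have hmem : (0 : ℕ) ∈ schedCost '' {S | IsSchedule k ([] : List U) S} := by
        refine ⟨[], ⟨rfl, by simp⟩, by simp [schedCost]⟩
      have h0 : optCost k ([] : List U) ≤ 0 := Nat.sInf_le hmem
      exact h0.trans (Nat.zero_le _)
  | cons x s' =>
      -- identify phases
      have hstep0 : phaseStep k (([] : List (List U)), ([] : List U)) x = ([], [x]) := by
        simp [phaseStep, hk]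
      set F := List.foldl (phaseStep k) (([] : List (List U)), [x]) s' with hF
      have hsnd : ∀ (r : List U) (done : List (List U)) (cur : List U), cur ≠ [] →
          (List.foldl (phaseStep k) (done, cur) r).2 ≠ [] := by
        intro r
        induction r with
        | nil => intro done cur h; exact h
        | cons z r ihr =>
            intro done cur h
            rw [List.foldl_cons]
            by_cases hc : (insert z cur.toFinset).card ≤ k
            · rw [show phaseStep k (done, cur) z = (done, cur ++ [z]) from by simp [phaseStep, hc]]
              exact ihr _ _ (by simp)
            · rw [show phaseStep k (done, cur) z = (done ++ [cur], [z]) from by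
                simp [phaseStep, hc]]
              exact ihr _ _ (by simp)
      have hphases : phases k (x :: s') = F.1 ++ [F.2] := by
        rw [phases]
        simp only [List.foldl_cons, hstep0]
        rw [if_neg (hsnd s' [] [x] (by simp))]
      have hnewCount : newCount k (x :: s') = 1 + M k ∅ {x} s' := by
        rw [newCount, hphases, foldl_zip]
        have := g_eq (U := U) k hk s' [] [x] (by simpa using hk)
        rw [hF, this]
        simp [newInPhaseAux]
      obtain ⟨S, hlen, hmem, hcost⟩ :=
        sched_aux k s' ∅ {x} {x} subset_rfl (by simpa using hk) hk (by simp)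
      have hsched : IsSchedule k (x :: s') ({x} :: S) := by
        refine ⟨by simp [hlen], ?_⟩
        intro p hp
        simp only [List.zip_cons_cons, List.mem_cons] at hp
        rcases hp with rfl | hp
        · exact ⟨Finset.mem_singleton_self x, by simpa using hk⟩
        · exact hmem _ hp
      have hopt : optCost k (x :: s') ≤ schedCost ({x} :: S) :=
        Nat.sInf_le ⟨{x} :: S, hsched, rfl⟩
      rw [hnewCount]
      omega

end Paging
end

section
/- Let s be a request sequence with cache size k and let ℓ ≥ 2 be such that s has an ℓth phase. Then every schedule for s incurs at least new_in_ph(ℓ) evictions at times belonging to phases ℓ−1 and ℓ, where new_in_ph(ℓ) is the number of new requests in the ℓth phase. (Consequently, the number of distinct items requested during phases ℓ−1 and ℓ is k + new_in_ph(ℓ), and any schedule must evict at least new_in_ph(ℓ) of them during those two phases.) -/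
/-!
Paging: every schedule incurs at least new_in_ph(ℓ) evictions during phases ℓ-1 and ℓ.
A request sequence is a `List U`; a schedule is a list of caches (Finsets of size ≤ k,
each containing the corresponding request); its cost is the number of evictions.
Phases partition the sequence into maximal consecutive blocks with ≤ k distinct items;
a request is *new* if its item was requested neither earlier in its phase nor in the
previous phase.
-/

namespace Paging

variable {U : Type*} [DecidableEq U]

/-- The previous phase of the `ℓ`th phase (phases are numbered starting from 1);
empty when `ℓ ≤ 1`. -/
def prevPhase (k : ℕ) (s : List U) (ℓ : ℕ) : List U :=
  if 2 ≤ ℓ then (phases k s).getD (ℓ - 2) [] else []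

/-- `new_in_ph(ℓ)`: the number of new requests in the `ℓ`th phase of `s`. -/
def newInPh (k : ℕ) (s : List U) (ℓ : ℕ) : ℕ :=
  newInPhaseAux (prevPhase k s ℓ) [] ((phases k s).getD (ℓ - 1) [])

/-- The first time step (0-indexed) of the `ℓ`th phase of `s`;
for `ℓ` one more than the number of phases this is the length of `s`. -/
def phaseStart (k : ℕ) (s : List U) (ℓ : ℕ) : ℕ :=
  (((phases k s).take (ℓ - 1)).map List.length).sum

/-- The number of evictions a schedule `S` incurs at (0-indexed) time `t`:
the number of items in `S_{t-1}` but not in `S_t` (zero at time `0`). -/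
def evictAt (S : List (Finset U)) (t : ℕ) : ℕ :=
  (S.getD (t - 1) ∅ \ S.getD t ∅).card


section Aux

variable {U : Type*} [DecidableEq U]

lemma newInPhaseAux_eq (prev : List U) : ∀ (rest seen : List U),
    newInPhaseAux prev seen rest
      = (rest.toFinset \ (prev.toFinset ∪ seen.toFinset)).card := by
  intro rest
  induction rest with
  | nil => intro seen; simp [newInPhaseAux]
  | cons x rest ih =>
    intro seen
    rw [newInPhaseAux, ih (x :: seen)]
    have e1 : prev.toFinset ∪ (x :: seen).toFinset
        = insert x (prev.toFinset ∪ seen.toFinset) := by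
      simp only [List.toFinset_cons, Finset.union_insert]
    by_cases h : x ∈ prev ∨ x ∈ seen
    · have hxA : x ∈ prev.toFinset ∪ seen.toFinset := by simpa using h
      rw [if_pos h, e1, Finset.insert_eq_self.mpr hxA, List.toFinset_cons,
        Finset.insert_sdiff_of_mem _ hxA]
      omega
    · have hxA : x ∉ prev.toFinset ∪ seen.toFinset := by simpa using h
      rw [if_neg h, e1, List.toFinset_cons, Finset.insert_sdiff_of_notMem _ hxA,
        Finset.sdiff_insert]
      have e2 : insert x (rest.toFinset \ (prev.toFinset ∪ seen.toFinset))
          = insert x ((rest.toFinset \ (prev.toFinset ∪ seen.toFinset)).erase x) := by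
        ext y; simp [Finset.mem_erase]; tauto
      rw [e2, Finset.card_insert_of_notMem (Finset.notMem_erase _ _)]
      omega

lemma phases_foldl_spec (k : ℕ) (hk : 1 ≤ k) :
    ∀ (s : List U) (acc : List (List U) × List U),
    (∀ p ∈ acc.1, p.toFinset.card = k) → acc.2.toFinset.card ≤ k →
    (∀ p ∈ (s.foldl (phaseStep k) acc).1, p.toFinset.card = k) ∧
    (s.foldl (phaseStep k) acc).2.toFinset.card ≤ k ∧
    (s.foldl (phaseStep k) acc).1.flatten ++ (s.foldl (phaseStep k) acc).2
      = acc.1.flatten ++ acc.2 ++ s := by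
  intro s
  induction s with
  | nil => intro acc h1 h2; exact ⟨h1, h2, by simp⟩
  | cons x s ih =>
    intro acc h1 h2
    rw [List.foldl_cons]
    by_cases hx : (insert x acc.2.toFinset).card ≤ k
    · have hstep : phaseStep k acc x = (acc.1, acc.2 ++ [x]) := by
        rw [phaseStep, if_pos hx]
      rw [hstep]
      have h2' : (acc.2 ++ [x]).toFinset.card ≤ k := by
        have : (acc.2 ++ [x]).toFinset = insert x acc.2.toFinset := by
          ext y; simp
        rw [this]; exact hx
      obtain ⟨a, b, c⟩ := ih (acc.1, acc.2 ++ [x]) h1 h2'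
      refine ⟨a, b, ?_⟩
      rw [c]; simp
    · have hstep : phaseStep k acc x = (acc.1 ++ [acc.2], [x]) := by
        rw [phaseStep, if_neg hx]
      rw [hstep]
      have hcard : acc.2.toFinset.card = k := by
        have := Finset.card_insert_le x acc.2.toFinset
        omega
      have h1' : ∀ p ∈ acc.1 ++ [acc.2], p.toFinset.card = k := by
        intro p hp
        rcases List.mem_append.mp hp with hp | hp
        · exact h1 p hp
        · simp at hp; subst hp; exact hcard
      have h2' : ([x] : List U).toFinset.card ≤ k := by
        simp
        omega
      obtain ⟨a, b, c⟩ := ih (acc.1 ++ [acc.2], [x]) h1' h2'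
      refine ⟨a, b, ?_⟩
      rw [c]; simp

lemma phases_flatten (k : ℕ) (hk : 1 ≤ k) (s : List U) : (phases k s).flatten = s := by
  obtain ⟨-, -, c⟩ := phases_foldl_spec k hk s ([], []) (by simp) (by simp)
  rw [phases]
  split
  · rename_i h
    simpa [h] using c
  · simpa using c

lemma phases_dropLast_card (k : ℕ) (hk : 1 ≤ k) (s : List U) :
    ∀ p ∈ (phases k s).dropLast, p.toFinset.card = k := by
  obtain ⟨a, -, -⟩ := phases_foldl_spec k hk s ([], []) (by simp) (by simp)
  rw [phases]
  split
  · intro p hp; exact a p (List.dropLast_subset _ hp)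
  · rw [List.dropLast_concat]; exact a

lemma chain (S : List (Finset U)) (a : ℕ) :
    ∀ (m : ℕ) (D : Finset U),
    (∀ x ∈ D, ∃ t, a ≤ t ∧ t ≤ a + m ∧ x ∈ S.getD t ∅) →
    (D \ S.getD (a + m) ∅).card ≤ ∑ t ∈ Finset.Ico (a + 1) (a + m + 1), evictAt S t := by
  intro m
  induction m with
  | zero =>
    intro D h
    simp only [Nat.add_zero]
    have : D \ S.getD a ∅ = ∅ := by
      rw [Finset.sdiff_eq_empty_iff_subset]
      intro x hx
      obtain ⟨t, h1, h2, h3⟩ := h x hx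
      have : t = a := by omega
      rwa [this] at h3
    rw [this]; simp
  | succ m ih =>
    intro D h
    classical
    set D' := D.filter (fun x => ∃ t, a ≤ t ∧ t ≤ a + m ∧ x ∈ S.getD t ∅) with hD'
    have hsub : D \ S.getD (a + (m + 1)) ∅ ⊆
        (D' \ S.getD (a + m) ∅) ∪ (S.getD (a + m) ∅ \ S.getD (a + m + 1) ∅) := by
      intro x hx
      rw [Finset.mem_sdiff] at hx
      obtain ⟨hxD, hxS⟩ := hx
      obtain ⟨t, h1, h2, h3⟩ := h x hxD
      have ht : t ≤ a + m := by
        rcases Nat.lt_or_ge t (a + m + 1) with h' | h'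
        · omega
        · exfalso; have : t = a + m + 1 := by omega
          rw [this] at h3
          exact hxS (by simpa [Nat.add_assoc] using h3)
      have hxD' : x ∈ D' := Finset.mem_filter.mpr ⟨hxD, t, h1, ht, h3⟩
      by_cases hxm : x ∈ S.getD (a + m) ∅
      · exact Finset.mem_union_right _ (Finset.mem_sdiff.mpr ⟨hxm, by simpa [Nat.add_assoc] using hxS⟩)
      · exact Finset.mem_union_left _ (Finset.mem_sdiff.mpr ⟨hxD', hxm⟩)
    calc (D \ S.getD (a + (m + 1)) ∅).card
        ≤ ((D' \ S.getD (a + m) ∅) ∪ (S.getD (a + m) ∅ \ S.getD (a + m + 1) ∅)).card :=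
          Finset.card_le_card hsub
      _ ≤ (D' \ S.getD (a + m) ∅).card + (S.getD (a + m) ∅ \ S.getD (a + m + 1) ∅).card :=
          Finset.card_union_le _ _
      _ ≤ (∑ t ∈ Finset.Ico (a + 1) (a + m + 1), evictAt S t) + evictAt S (a + m + 1) := by
          have h1 := ih D' (fun x hx => (Finset.mem_filter.mp hx).2)
          have h2 : evictAt S (a + m + 1) = (S.getD (a + m) ∅ \ S.getD (a + m + 1) ∅).card := by
            rw [evictAt]; simp
          omega
      _ = ∑ t ∈ Finset.Ico (a + 1) (a + (m + 1) + 1), evictAt S t := by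
          have h3 : a + (m + 1) + 1 = (a + m + 1) + 1 := by omega
          rw [h3]
          exact (Finset.sum_Ico_succ_top (by omega) _).symm

end Aux

/-- if `s` has an `ℓ`th phase (`ℓ ≥ 2`), then every schedule for `s`
incurs at least `new_in_ph(ℓ)` evictions at times belonging to phases `ℓ-1` and `ℓ`. -/
theorem evictions_in_two_phases (k : ℕ) (hk : 1 ≤ k) (s : List U) (ℓ : ℕ) (hℓ : 2 ≤ ℓ)
    (hph : ℓ ≤ (phases k s).length) (S : List (Finset U)) (hS : IsSchedule k s S) :
    newInPh k s ℓ ≤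
      ∑ t ∈ Finset.Ico (phaseStart k s (ℓ - 1)) (phaseStart k s (ℓ + 1)), evictAt S t := by
  classical
  obtain ⟨i, rfl⟩ : ∃ i, ℓ = i + 2 := ⟨ℓ - 2, by omega⟩
  have hi1 : i + 1 < (phases k s).length := by omega
  have hi : i < (phases k s).length := by omega
  set P := phases k s with hPdef
  set PA := P[i] with hPA
  set PB := P[i+1] with hPB
  -- phase i (0-indexed) is not the last, so it has exactly k distinct items
  have hAcard : PA.toFinset.card = k := by
    have hi' : i < P.dropLast.length := by
      rw [List.length_dropLast]; omega
    have hmem : PA ∈ P.dropLast := by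
      rw [hPA, ← List.getElem_dropLast hi']
      exact List.getElem_mem hi'
    exact phases_dropLast_card k hk s PA hmem
  have hAne : 1 ≤ PA.length := by
    rcases PA with _ | ⟨y, l⟩
    · simp at hAcard; omega
    · simp
  -- decompose s
  set pre := (P.take i).flatten with hpre
  set Q := PA ++ PB with hQ
  set suf := (P.drop (i+2)).flatten with hsuf
  have hdropi : P.drop i = PA :: PB :: P.drop (i+2) := by
    rw [List.drop_eq_getElem_cons hi, List.drop_eq_getElem_cons hi1]
  have hs : s = pre ++ (Q ++ suf) := by
    conv_lhs => rw [← phases_flatten k hk s, ← hPdef, ← List.take_append_drop i P]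
    rw [List.flatten_append, hdropi]
    simp [hpre, hQ, hsuf, List.append_assoc]
  have hQlen : 1 ≤ Q.length := by
    rw [hQ, List.length_append]; omega
  have hslen : s.length = pre.length + (Q.length + suf.length) := by
    rw [hs]; simp
  have hSlen : S.length = s.length := hS.1
  -- phaseStart values
  have ha : phaseStart k s (i + 2 - 1) = pre.length := by
    rw [phaseStart, hpre, List.length_flatten]
    norm_num
    rfl
  have hc : phaseStart k s (i + 2 + 1) = pre.length + Q.length := by
    rw [phaseStart]
    have htake : (phases k s).take (i + 2 + 1 - 1) = P.take i ++ [PA, PB] := by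
      rw [← hPdef]
      have : i + 2 + 1 - 1 = i + 2 := by omega
      rw [this, List.take_add, hdropi]
      rfl
    rw [htake]
    simp [hpre, hQ, List.length_flatten]
  -- every item of Q is requested at some time in [pre.length, pre.length + Q.length)
  have hreq : ∀ j, (hj : j < Q.length) → Q[j] ∈ S.getD (pre.length + j) ∅ := by
    intro j hj
    have hlt : pre.length + j < s.length := by omega
    have hgetm : s[pre.length + j] = Q[j] := by
      rw [List.getElem_of_eq hs hlt,
        List.getElem_append_right (by omega : pre.length ≤ pre.length + j)]
      rw [List.getElem_append_left (by omega : pre.length + j - pre.length < Q.length)]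
      have e : pre.length + j - pre.length = j := by omega
      simp [e]
    have hltS : pre.length + j < S.length := by omega
    have hzlen : pre.length + j < (s.zip S).length := by
      rw [List.length_zip]; omega
    have hmemz : (s[pre.length + j], S[pre.length + j]) ∈ s.zip S := by
      rw [← List.getElem_zip (h := hzlen)]
      exact List.getElem_mem hzlen
    have := (hS.2 _ hmemz).1
    rw [hgetm] at this
    rwa [List.getD_eq_getElem S ∅ hltS]
  -- the cache at any time has at most k items
  have hcache : ∀ t, t < S.length → (S.getD t ∅).card ≤ k := by
    intro t ht
    have hts : t < s.length := by omega
    have hzlen : t < (s.zip S).length := by rw [List.length_zip]; omega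
    have hmemz : (s[t], S[t]) ∈ s.zip S := by
      rw [← List.getElem_zip (h := hzlen)]
      exact List.getElem_mem hzlen
    rw [List.getD_eq_getElem S ∅ ht]
    exact (hS.2 _ hmemz).2
  -- apply the chain lemma
  set m := Q.length - 1 with hm
  have hchain := chain S pre.length m Q.toFinset (by
    intro x hx
    rw [List.mem_toFinset, List.mem_iff_getElem] at hx
    obtain ⟨j, hj, rfl⟩ := hx
    exact ⟨pre.length + j, by omega, by omega, hreq j hj⟩)
  -- count distinct items
  have hnew : newInPh k s (i + 2) = (PB.toFinset \ PA.toFinset).card := by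
    rw [newInPh, newInPhaseAux_eq, prevPhase, if_pos (by omega : 2 ≤ i + 2)]
    have e1 : i + 2 - 2 = i := by omega
    have e2 : i + 2 - 1 = i + 1 := by omega
    rw [e1, e2, ← hPdef, List.getD_eq_getElem P [] hi, List.getD_eq_getElem P [] hi1,
      ← hPA, ← hPB]
    simp
  have hQcard : Q.toFinset.card = k + (PB.toFinset \ PA.toFinset).card := by
    have h := Finset.card_sdiff_add_card PB.toFinset PA.toFinset
    rw [hQ, List.toFinset_append, Finset.union_comm]
    omega
  have hlast : (S.getD (pre.length + m) ∅).card ≤ k := by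
    apply hcache
    omega
  have hsdiff := Finset.le_card_sdiff (S.getD (pre.length + m) ∅) Q.toFinset
  -- combine
  rw [ha, hc, hnew]
  have hIco : pre.length + Q.length = pre.length + m + 1 := by omega
  rw [hIco]
  calc (PB.toFinset \ PA.toFinset).card
      ≤ (Q.toFinset \ S.getD (pre.length + m) ∅).card := by omega
    _ ≤ ∑ t ∈ Finset.Ico (pre.length + 1) (pre.length + m + 1), evictAt S t := hchain
    _ ≤ ∑ t ∈ Finset.Ico pre.length (pre.length + m + 1), evictAt S t := by
        apply Finset.sum_le_sum_of_subset
        apply Finset.Ico_subset_Ico (by omega) le_rfl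


end Paging
end

section
/- Let DMark be any lazy deterministic marking algorithm with cache size k. For every request sequence s, every eviction made by DMark occurs at a request that is new or worrisome; hence DMark(s) is at most the number of new requests of s plus the number of worrisome requests of s (worrisome being judged with respect to DMark's own cache). -/
/-!
A lazy algorithm leaves its cache unchanged on a hit and evicts at most one item on a miss.
A missed item that is not new is worrisome by definition, so every request costs at most
one eviction, and only when it is new or worrisome.
-/

namespace Paging

variable {U : Type*} [DecidableEq U]

/-- State after processing a prefix: (items of the previous phase, items of the current
phase). On request `x`: stay in the current phase if at most `k` distinct items result,
otherwise start a new phase. -/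
def pstep (k : ℕ) (p : Finset U × Finset U) (x : U) : Finset U × Finset U :=
  if (insert x p.2).card ≤ k then (p.1, insert x p.2) else (p.2, {x})

/-- (items of the previous phase, items of the current phase) after processing `s`. -/
def pstate (k : ℕ) (s : List U) : Finset U × Finset U := s.foldl (pstep k) (∅, ∅)

/-- The request to item `x` following prefix `s` is *new*: `x` was requested neither
earlier in its phase nor in the previous phase. (If `x` starts a new phase, its phase has
no earlier requests and its previous phase consists of the current-phase items of `s`.) -/
def IsNewReq (k : ℕ) (s : List U) (x : U) : Prop :=
  x ∉ (pstate k s).2 ∧ (x ∉ (pstate k s).1 ∨ k < (insert x (pstate k s).2).card)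

/-- The request to item `x` following prefix `s` is *worrisome* with respect to a cache
`C`: `x` was requested in the previous phase or earlier in the current phase (i.e. it is
not new), but is not in the cache. -/
def IsWorrisomeReq (k : ℕ) (s : List U) (C : Finset U) (x : U) : Prop :=
  ¬IsNewReq k s x ∧ x ∉ C

/-- The marked items, computed on the reversed request sequence (most recent request
first), for an algorithm with cache function `C`: each requested item is marked; when an
eviction is needed (requested item absent from a full cache) and all cached items are
marked, all marks are first erased. -/
def marksRev (k : ℕ) (C : List U → Finset U) : List U → Finset U
  | [] => ∅
  | x :: rest =>
      let M := marksRev k C rest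
      let pre := rest.reverse
      if x ∉ C pre ∧ (C pre).card = k ∧ C pre ⊆ M then {x} else insert x M

/-- The set of marked items after processing `s`, for an algorithm with cache
function `C`. -/
def marksOf (k : ℕ) (C : List U → Finset U) (s : List U) : Finset U := marksRev k C s.reverse

/-- A lazy deterministic marking algorithm with cache size `k`: it starts with an empty
cache; on a hit it changes nothing; on a miss with a non-full cache it just inserts the
requested item; on a miss with a full cache it evicts exactly one item, which must be
unmarked (unless all cached items are marked, in which case all marks are first erased and
any cached item may be evicted). -/
structure LazyMarkingAlg (U : Type*) [DecidableEq U] (k : ℕ) where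
  cache : List U → Finset U
  init : cache [] = ∅
  card_le : ∀ s, (cache s).card ≤ k
  hit : ∀ s x, x ∈ cache s → cache (s ++ [x]) = cache s
  miss_notfull : ∀ s x, x ∉ cache s → (cache s).card < k →
      cache (s ++ [x]) = insert x (cache s)
  miss_full : ∀ s x, x ∉ cache s → (cache s).card = k →
      ∃ y ∈ cache s, (cache s ⊆ marksOf k cache s ∨ y ∉ marksOf k cache s) ∧
        cache (s ++ [x]) = insert x ((cache s).erase y)

/-- The cost (total number of evictions) of the on-line algorithm with cache function `C`
on the request sequence `s`. -/
def algCostOf (C : List U → Finset U) (s : List U) : ℕ :=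
  ∑ t ∈ Finset.range s.length, (C (s.take t) \ C (s.take (t + 1))).card

open Classical in
/-- The number of new requests in `s`. -/
noncomputable def newReqCount (k : ℕ) (s : List U) : ℕ :=
  ((Finset.range s.length).filter fun t =>
    ∃ x, s[t]? = some x ∧ IsNewReq k (s.take t) x).card

open Classical in
/-- The number of worrisome requests in `s`, with respect to the caches of the on-line
algorithm with cache function `C`. -/
noncomputable def worrisomeReqCount (k : ℕ) (C : List U → Finset U) (s : List U) : ℕ :=
  ((Finset.range s.length).filter fun t =>
    ∃ x, s[t]? = some x ∧ IsWorrisomeReq k (s.take t) (C (s.take t)) x).card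

open Finset

theorem _root_.Finset.sum_le_card_add_card {ι : Type*} [DecidableEq ι] {S T₁ T₂ : Finset ι}
    {f : ι → ℕ} (hf : ∀ i ∈ S, f i ≤ 1) (hT : ∀ i ∈ S, f i ≠ 0 → i ∈ T₁ ∨ i ∈ T₂) :
    ∑ i ∈ S, f i ≤ #T₁ + #T₂ := by
  have hle (i) (hi : i ∈ S) : f i ≤ (if i ∈ T₁ then 1 else 0) + (if i ∈ T₂ then 1 else 0) := by
    have := hf i hi
    have := hT i hi
    split_ifs <;> grind
  calc ∑ i ∈ S, f i ≤ #{i ∈ S | i ∈ T₁} + #{i ∈ S | i ∈ T₂} := by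
        simpa only [card_filter, ← sum_add_distrib] using sum_le_sum hle
    _ ≤ #T₁ + #T₂ := by
        gcongr <;> exact fun i hi => (mem_filter.mp hi).2

theorem isNewReq_or_isWorrisomeReq_of_notMem {k : ℕ} {s : List U} {C : Finset U} {x : U}
    (hx : x ∉ C) : IsNewReq k s x ∨ IsWorrisomeReq k s C x :=
  (em _).imp_right fun h => ⟨h, hx⟩

namespace LazyMarkingAlg

variable {k : ℕ} (A : LazyMarkingAlg U k)

theorem card_cache_sdiff_cache_append_le_one (s : List U) (x : U) :
    #(A.cache s \ A.cache (s ++ [x])) ≤ 1 := by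
  by_cases hx : x ∈ A.cache s
  · simp [A.hit s x hx]
  rcases (A.card_le s).lt_or_eq with hlt | heq
  · rw [A.miss_notfull s x hx hlt, sdiff_eq_empty_iff_subset.mpr (subset_insert _ _)]
    simp
  · obtain ⟨y, -, -, hy⟩ := A.miss_full s x hx heq
    rw [hy]
    refine (card_le_card fun a ha => ?_).trans (card_singleton y).le
    simp only [mem_sdiff, mem_insert, mem_erase] at ha
    simp only [mem_singleton]
    tauto

theorem notMem_cache_of_cache_sdiff_ne_empty {s : List U} {x : U}
    (h : A.cache s \ A.cache (s ++ [x]) ≠ ∅) : x ∉ A.cache s :=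
  fun hx => h (by simp [A.hit s x hx])

end LazyMarkingAlg

theorem lazyMarking_cost_le_new_add_worrisome_general (k : ℕ)
    (A : LazyMarkingAlg U k) (s : List U) :
    (∀ t < s.length, (A.cache (s.take t) \ A.cache (s.take (t + 1))) ≠ ∅ →
        ∃ x, s[t]? = some x ∧
          (IsNewReq k (s.take t) x ∨ IsWorrisomeReq k (s.take t) (A.cache (s.take t)) x)) ∧
    algCostOf A.cache s ≤ newReqCount k s + worrisomeReqCount k A.cache s := by
  have evicts_only_if_new_or_worrisome : ∀ t < s.length,
      (A.cache (s.take t) \ A.cache (s.take (t + 1))) ≠ ∅ →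
        ∃ x, s[t]? = some x ∧
          (IsNewReq k (s.take t) x ∨ IsWorrisomeReq k (s.take t) (A.cache (s.take t)) x) :=
    fun t ht hne => ⟨s[t], List.getElem?_eq_getElem ht, isNewReq_or_isWorrisomeReq_of_notMem
      (A.notMem_cache_of_cache_sdiff_ne_empty (List.take_succ_eq_append_getElem ht ▸ hne))⟩
  refine ⟨evicts_only_if_new_or_worrisome, ?_⟩
  unfold algCostOf newReqCount worrisomeReqCount
  refine sum_le_card_add_card (fun t ht => ?_) fun t ht hne => ?_
  · rw [List.take_succ_eq_append_getElem (mem_range.mp ht)]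
    exact A.card_cache_sdiff_cache_append_le_one _ _
  · obtain ⟨x, hx, h⟩ := evicts_only_if_new_or_worrisome t (mem_range.mp ht)
      (card_ne_zero.mp hne).ne_empty
    simp only [mem_filter]
    exact h.imp (⟨ht, x, hx, ·⟩) (⟨ht, x, hx, ·⟩)

/-- for a lazy deterministic marking algorithm `A` with cache size
`k ≥ 1`, every eviction occurs at a request that is new or worrisome; hence the cost of
`A` on `s` is at most the number of new requests plus the number of worrisome requests
of `s`. -/
theorem lazyMarking_cost_le_new_add_worrisome (k : ℕ) (hk : 1 ≤ k)
    (A : LazyMarkingAlg U k) (s : List U) :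
    (∀ t < s.length, (A.cache (s.take t) \ A.cache (s.take (t + 1))) ≠ ∅ →
        ∃ x, s[t]? = some x ∧
          (IsNewReq k (s.take t) x ∨ IsWorrisomeReq k (s.take t) (A.cache (s.take t)) x)) ∧
    algCostOf A.cache s ≤ newReqCount k s + worrisomeReqCount k A.cache s :=
  lazyMarking_cost_le_new_add_worrisome_general k A s

end Paging
end

section
/- Let DMark be a lazy deterministic marking algorithm with cache size k, let ε > 0, let D ∈ Δ_ε, and let r be a random request sequence drawn from D; assume every phase of r has k non-redundant requests. Fix ℓ ≥ 1 and 1 ≤ i ≤ k−1, and let s be any finite sequence that has ℓ phases whose last phase contains exactly i non-redundant requests. Then the probability that the (i+1)st non-redundant request of the ℓth phase of r is worrisome (with respect to DMark's cache), conditioned on the prefix of r preceding that request being s, is at most w / max{1, ε^{−1} − i}, where w is the number of new requests in the ℓth phase of s. -/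
/-!
Paging, diffuse adversary: conditional probability bound on worrisome requests
for a lazy deterministic marking algorithm.
-/

namespace Paging

variable {U : Type*} [DecidableEq U]

open scoped ENNReal

open Classical in
/-- The probability under `D` that the random request sequence has `s` as a prefix. -/
noncomputable def prefProb (D : PMF (List ℕ)) (s : List ℕ) : ℝ≥0∞ :=
  ∑' r, if s <+: r then D r else 0

/-- `D ∈ Δ_ε`: for every prefix `s` and item `x`, the conditional probability that the
request following `s` is `x`, given that the random sequence properly extends `s`, is at
most `ε`. Stated multiplicatively (avoiding division):
`P[s ++ [x] is a prefix] ≤ ε · P[the random sequence properly extends s]`,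
and the latter probability equals `P[s is a prefix] - P[the random sequence equals s]`. -/
def memDelta (ε : ℝ≥0∞) (D : PMF (List ℕ)) : Prop :=
  ∀ s x, prefProb D (s ++ [x]) ≤ ε * (prefProb D s - D s)

open Classical in
/-- The probability of the event `E` under `D`. -/
noncomputable def prEvent (D : PMF (List ℕ)) (E : List ℕ → Prop) : ℝ≥0∞ :=
  ∑' r, if E r then D r else 0

/-- The expected value of `f` under `D`. -/
noncomputable def expVal (D : PMF (List ℕ)) (f : List ℕ → ℝ≥0∞) : ℝ≥0∞ :=
  ∑' r, D r * f r


section Combinatorics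

variable {U : Type*} [DecidableEq U]

lemma pstate_append (k : ℕ) (s : List U) (x : U) :
    pstate k (s ++ [x]) = pstep k (pstate k s) x := by
  simp [pstate, List.foldl_append]

lemma marksOf_append (k : ℕ) (C : List U → Finset U) (s : List U) (x : U) :
    marksOf k C (s ++ [x]) =
      if x ∉ C s ∧ (C s).card = k ∧ C s ⊆ marksOf k C s then {x}
      else insert x (marksOf k C s) := by
  simp [marksOf, marksRev]
  congr

/-- The fold underlying `phases`. -/
abbrev pfold (k : ℕ) (s : List U) : List (List U) × List U :=
  s.foldl (phaseStep k) ([], [])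

lemma pfold_append (k : ℕ) (s : List U) (x : U) :
    pfold k (s ++ [x]) = phaseStep k (pfold k s) x := by
  simp [pfold, List.foldl_append]

lemma pstate_eq (k : ℕ) (s : List U) :
    pstate k s = (((pfold k s).1.getLastD []).toFinset, (pfold k s).2.toFinset) := by
  induction s using List.reverseRecOn with
  | nil => simp [pstate, pfold]
  | append_singleton s x ih =>
      rw [pstate_append, pfold_append, ih]
      by_cases h : (insert x (pfold k s).2.toFinset).card ≤ k
      · simp only [pstep, phaseStep, h, if_pos]
        refine Prod.ext (by simp) ?_
        ext z; simp [or_comm]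
      · simp [pstep, phaseStep, h, List.getLastD_concat]

lemma newInPhaseAux_concat (prev : List U) (x : U) (l : List U) : ∀ seen : List U,
    newInPhaseAux prev seen (l ++ [x]) =
      newInPhaseAux prev seen l +
        (if x ∈ prev ∨ x ∈ l ∨ x ∈ seen then 0 else 1) := by
  induction l with
  | nil => intro seen; simp [newInPhaseAux]
  | cons y l ih =>
      intro seen
      rw [List.cons_append]
      rw [show newInPhaseAux prev seen ((y :: (l ++ [x]))) =
        (if y ∈ prev ∨ y ∈ seen then 0 else 1) + newInPhaseAux prev (y :: seen) (l ++ [x])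
        from rfl]
      rw [ih (y :: seen)]
      have hc : (x ∈ prev ∨ x ∈ l ∨ x ∈ y :: seen) ↔ (x ∈ prev ∨ x ∈ y :: l ∨ x ∈ seen) := by
        simp [List.mem_cons]; tauto
      rw [show newInPhaseAux prev seen (y :: l) =
        (if y ∈ prev ∨ y ∈ seen then 0 else 1) + newInPhaseAux prev (y :: seen) l from rfl]
      simp only [hc]
      omega

/-- `newInPh` expressed on the fold state. -/
def nipAux (k : ℕ) (s : List U) : ℕ :=
  newInPhaseAux ((pfold k s).1.getLastD []) [] (pfold k s).2

lemma nipAux_append (k : ℕ) (s : List U) (x : U) :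
    nipAux k (s ++ [x]) =
      if (insert x (pfold k s).2.toFinset).card ≤ k then
        nipAux k s + (if x ∈ (pfold k s).1.getLastD [] ∨ x ∈ (pfold k s).2 then 0 else 1)
      else (if x ∈ (pfold k s).2 then 0 else 1) := by
  by_cases h : (insert x (pfold k s).2.toFinset).card ≤ k
  · rw [if_pos h]
    unfold nipAux
    rw [pfold_append]
    unfold phaseStep
    rw [if_pos h]
    simp only []
    rw [newInPhaseAux_concat]
    simp
  · rw [if_neg h]
    unfold nipAux
    rw [pfold_append]
    unfold phaseStep
    rw [if_neg h]
    simp only [List.getLastD_concat]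
    simp [newInPhaseAux]


lemma pfold_snd_ne (k : ℕ) (s : List U) (hs : s ≠ []) : (pfold k s).2 ≠ [] := by
  induction s using List.reverseRecOn with
  | nil => exact absurd rfl hs
  | append_singleton s x ih =>
      rw [pfold_append]
      unfold phaseStep
      split <;> simp

lemma phases_eq (k : ℕ) (s : List U) (hs : s ≠ []) :
    phases k s = (pfold k s).1 ++ [(pfold k s).2] := by
  have h2 := pfold_snd_ne k s hs
  simp only [phases, pfold] at *
  rw [if_neg h2]

lemma newInPh_corr (k : ℕ) (s : List U) (hs : s ≠ []) :
    newInPh k s (phases k s).length = nipAux k s ∧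
    ((phases k s).getD ((phases k s).length - 1) []) = (pfold k s).2 := by
  rw [phases_eq k s hs]
  have hlen : ((pfold k s).1 ++ [(pfold k s).2]).length = (pfold k s).1.length + 1 := by
    simp
  have hcur : ((pfold k s).1 ++ [(pfold k s).2]).getD ((pfold k s).1.length) [] =
      (pfold k s).2 := by
    rw [List.getD_append_right _ _ _ _ le_rfl]
    simp
  have hprev : prevPhase k s ((pfold k s).1.length + 1) = (pfold k s).1.getLastD [] := by
    unfold prevPhase
    rcases List.eq_nil_or_concat (pfold k s).1 with hA | ⟨B, b, hA⟩
    all_goals try simp only [List.concat_eq_append] at hA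
    · rw [hA]
      norm_num
    · rw [phases_eq k s hs, hA]
      have h2 : 2 ≤ (B ++ [b]).length + 1 := by simp
      rw [if_pos h2, List.getLastD_concat]
      have : (B ++ [b]).length + 1 - 2 = B.length := by simp
      rw [this, List.append_assoc]
      rw [List.getD_append_right _ _ _ _ le_rfl]
      simp
  constructor
  · unfold newInPh nipAux
    rw [hlen]
    simp only [Nat.add_sub_cancel]
    rw [hprev, phases_eq k s hs, hcur]
  · rw [hlen]
    simp only [Nat.add_sub_cancel]
    exact hcur

lemma main_inv (k : ℕ) (hk : 1 ≤ k) (A : LazyMarkingAlg U k) (s : List U) :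
    (pstate k s).2.card ≤ k ∧ (pstate k s).2 ⊆ A.cache s ∧
      marksOf k A.cache s = (pstate k s).2 ∧
      ((pstate k s).1 \ A.cache s).card ≤ nipAux k s := by
  induction s using List.reverseRecOn with
  | nil => simp [pstate, A.init, marksOf, marksRev, nipAux, pfold]
  | append_singleton s x ih =>
      obtain ⟨hcard, hsub, hmark, hcount⟩ := ih
      have hp1 : (pstate k s).1 = ((pfold k s).1.getLastD []).toFinset := by
        rw [pstate_eq]
      have hp2 : (pstate k s).2 = (pfold k s).2.toFinset := by rw [pstate_eq]
      have hnip := nipAux_append k s x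
      rw [← hp2] at hnip
      by_cases h : (insert x (pstate k s).2).card ≤ k
      · -- mid-phase
        have hps' : pstate k (s ++ [x]) = ((pstate k s).1, insert x (pstate k s).2) := by
          rw [pstate_append]; unfold pstep; rw [if_pos h]
        rw [if_pos h] at hnip
        have hnores : ¬(x ∉ A.cache s ∧ (A.cache s).card = k ∧
            A.cache s ⊆ marksOf k A.cache s) := by
          rintro ⟨hx, hck, hcm⟩
          rw [hmark] at hcm
          have hce : A.cache s = (pstate k s).2 := Finset.Subset.antisymm hcm hsub
          rw [hce] at hx hck
          rw [Finset.card_insert_of_notMem hx, hck] at h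
          omega
        have hm' : marksOf k A.cache (s ++ [x]) = insert x (pstate k s).2 := by
          rw [marksOf_append, if_neg hnores, hmark]
        have hnip_ge : nipAux k s ≤ nipAux k (s ++ [x]) := by rw [hnip]; omega
        by_cases hxc : x ∈ A.cache s
        · have hc' := A.hit s x hxc
          refine ⟨?_, ?_, ?_, ?_⟩ <;> rw [hps']
          · exact h
          · rw [hc']; exact Finset.insert_subset hxc hsub
          · rw [hm']
          · rw [hc']; exact le_trans hcount hnip_ge
        · by_cases hfull : (A.cache s).card < k
          · have hc' := A.miss_notfull s x hxc hfull
            refine ⟨?_, ?_, ?_, ?_⟩ <;> rw [hps']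
            · exact h
            · rw [hc']; exact Finset.insert_subset_insert _ hsub
            · rw [hm']
            · rw [hc']
              refine le_trans (le_trans (Finset.card_le_card ?_) hcount) hnip_ge
              exact Finset.sdiff_subset_sdiff (le_refl _) (Finset.subset_insert _ _)
          · have hck : (A.cache s).card = k := le_antisymm (A.card_le s) (not_lt.1 hfull)
            obtain ⟨y, hy, hmk, hc'⟩ := A.miss_full s x hxc hck
            have hyc : y ∉ (pstate k s).2 := by
              rcases hmk with hmk | hmk
              · rw [hmark] at hmk
                have hce : A.cache s = (pstate k s).2 := Finset.Subset.antisymm hmk hsub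
                rw [hce] at hxc hck
                rw [Finset.card_insert_of_notMem hxc, hck] at h
                omega
              · rw [hmark] at hmk; exact hmk
            have hxcur : x ∉ (pstate k s).2 := fun hx => hxc (hsub hx)
            refine ⟨?_, ?_, ?_, ?_⟩ <;> rw [hps']
            · exact h
            · rw [hc']
              refine Finset.insert_subset_insert _ ?_
              intro z hz
              exact Finset.mem_erase.2 ⟨fun he => hyc (he ▸ hz), hsub hz⟩
            · rw [hm']
            · rw [hc', hnip]
              by_cases hxp : x ∈ (pstate k s).1
              · have hmem : x ∈ (pfold k s).1.getLastD [] := by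
                  rw [hp1] at hxp; exact List.mem_toFinset.1 hxp
                rw [if_pos (Or.inl hmem), Nat.add_zero]
                have hsub2 : (pstate k s).1 \ insert x ((A.cache s).erase y) ⊆
                    insert y (((pstate k s).1 \ A.cache s).erase x) := by
                  intro z hz
                  simp only [Finset.mem_sdiff, Finset.mem_insert, Finset.mem_erase,
                    not_or, not_and, not_not] at hz ⊢
                  by_cases hzy : z = y
                  · exact Or.inl hzy
                  · refine Or.inr ⟨hz.2.1, hz.1, fun hzc => ?_⟩
                    have := hz.2.2
                    tauto
                have hxm : x ∈ (pstate k s).1 \ A.cache s := Finset.mem_sdiff.2 ⟨hxp, hxc⟩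
                have hpos : 0 < ((pstate k s).1 \ A.cache s).card := Finset.card_pos.2 ⟨x, hxm⟩
                calc ((pstate k s).1 \ insert x ((A.cache s).erase y)).card
                    ≤ (insert y (((pstate k s).1 \ A.cache s).erase x)).card :=
                      Finset.card_le_card hsub2
                  _ ≤ (((pstate k s).1 \ A.cache s).erase x).card + 1 :=
                      Finset.card_insert_le _ _
                  _ = ((pstate k s).1 \ A.cache s).card - 1 + 1 := by
                      rw [Finset.card_erase_of_mem hxm]
                  _ ≤ nipAux k s := by omega
              · have hsub2 : (pstate k s).1 \ insert x ((A.cache s).erase y) ⊆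
                    insert y ((pstate k s).1 \ A.cache s) := by
                  intro z hz
                  simp only [Finset.mem_sdiff, Finset.mem_insert, Finset.mem_erase,
                    not_or, not_and, not_not] at hz ⊢
                  by_cases hzy : z = y
                  · exact Or.inl hzy
                  · refine Or.inr ⟨hz.1, fun hzc => ?_⟩
                    have := hz.2.2
                    tauto
                calc ((pstate k s).1 \ insert x ((A.cache s).erase y)).card
                    ≤ (insert y ((pstate k s).1 \ A.cache s)).card :=
                      Finset.card_le_card hsub2
                  _ ≤ ((pstate k s).1 \ A.cache s).card + 1 := Finset.card_insert_le _ _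
                  _ ≤ nipAux k s + (if x ∈ (pfold k s).1.getLastD [] ∨
                        x ∈ (pfold k s).2 then 0 else 1) := by
                      have hcond : ¬(x ∈ (pfold k s).1.getLastD [] ∨ x ∈ (pfold k s).2) := by
                        rw [← List.mem_toFinset, ← List.mem_toFinset, ← hp1, ← hp2]
                        tauto
                      rw [if_neg hcond]
                      omega
      · -- phase boundary
        rw [if_neg h] at hnip
        have hxcur : x ∉ (pstate k s).2 := by
          intro hx
          exact h (by rw [Finset.insert_eq_self.2 hx]; exact hcard)
        have hcurk : (pstate k s).2.card = k := by
          have h1 := Finset.card_insert_of_notMem hxcur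
          omega
        have hcache : A.cache s = (pstate k s).2 := by
          exact (Finset.eq_of_subset_of_card_le hsub (by rw [hcurk]; exact A.card_le s)).symm
        have hxc : x ∉ A.cache s := by rw [hcache]; exact hxcur
        obtain ⟨y, hy, _, hc'⟩ := A.miss_full s x hxc (by rw [hcache]; exact hcurk)
        have hps' : pstate k (s ++ [x]) = ((pstate k s).2, {x}) := by
          rw [pstate_append]; unfold pstep; rw [if_neg h]
        have hm' : marksOf k A.cache (s ++ [x]) = {x} := by
          rw [marksOf_append, if_pos]
          exact ⟨hxc, by rw [hcache]; exact hcurk, by rw [hmark, hcache]⟩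
        have hcond : ¬ x ∈ (pfold k s).2 := by
          rw [← List.mem_toFinset, ← hp2]; exact hxcur
        refine ⟨?_, ?_, ?_, ?_⟩ <;> rw [hps']
        · simpa using hk
        · rw [hc']; intro z hz
          rw [Finset.mem_singleton] at hz
          rw [hz]; exact Finset.mem_insert_self _ _
        · exact hm'
        · rw [hc', hnip, if_neg hcond]
          have hsub2 : (pstate k s).2 \ insert x ((A.cache s).erase y) ⊆ {y} := by
            intro z hz
            simp only [Finset.mem_sdiff, Finset.mem_insert, Finset.mem_erase, not_or,
              not_and, not_not, Finset.mem_singleton] at hz ⊢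
            rcases hz with ⟨hz1, hz2, hz3⟩
            by_cases hzy : z = y
            · exact hzy
            · exact absurd (hz3 hzy) (by rw [hcache]; exact fun hh => hh hz1)
          calc ((pstate k s).2 \ insert x ((A.cache s).erase y)).card ≤ ({y} : Finset U).card :=
                Finset.card_le_card hsub2
            _ = 1 := Finset.card_singleton y

end Combinatorics


section Probability
open Classical

lemma prefix_snoc_of_getElem {s r : List ℕ} {x : ℕ} (h : s <+: r)
    (hx : r[s.length]? = some x) : s ++ [x] <+: r := by
  obtain ⟨t, rfl⟩ := h
  rw [List.getElem?_append_right le_rfl, Nat.sub_self] at hx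
  cases t with
  | nil => simp at hx
  | cons y t' =>
      simp only [List.getElem?_cons_zero, Option.some.injEq] at hx
      exact ⟨t', by rw [hx]; simp⟩

lemma exists_getElem_of_proper {s r : List ℕ} (h : s <+: r) (hne : r ≠ s) :
    ∃ x, r[s.length]? = some x ∧ s ++ [x] <+: r := by
  obtain ⟨t, rfl⟩ := h
  cases t with
  | nil => simp at hne
  | cons y t' =>
      refine ⟨y, ?_, ⟨t', by simp⟩⟩
      rw [List.getElem?_append_right le_rfl, Nat.sub_self]
      simp

lemma prefProb_le_one (D : PMF (List ℕ)) (s : List ℕ) : prefProb D s ≤ 1 := by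
  rw [prefProb, ← D.tsum_coe]
  refine Summable.tsum_le_tsum (fun r => ?_) ENNReal.summable ENNReal.summable
  split <;> simp

lemma prEvent_mono (D : PMF (List ℕ)) {E F : List ℕ → Prop} (h : ∀ r, E r → F r) :
    prEvent D E ≤ prEvent D F := by
  rw [prEvent, prEvent]
  refine Summable.tsum_le_tsum (fun r => ?_) ENNReal.summable ENNReal.summable
  split
  · rename_i hE
    rw [if_pos (h r hE)]
  · exact zero_le

lemma prEvent_le_sum (D : PMF (List ℕ)) (s : List ℕ) (Q : ℕ → Prop) (W : Finset ℕ)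
    (hQ : ∀ x, Q x → x ∈ W) :
    prEvent D (fun r => s <+: r ∧ ∃ x, r[s.length]? = some x ∧ Q x) ≤
      ∑ x ∈ W, prefProb D (s ++ [x]) := by
  rw [prEvent]
  simp only [prefProb]
  rw [← Summable.tsum_finsetSum (fun i _ => ENNReal.summable)]
  refine Summable.tsum_le_tsum (fun r => ?_) ENNReal.summable ENNReal.summable
  split
  · rename_i hE
    obtain ⟨hpre, x, hx, hQx⟩ := hE
    have hx' : (s ++ [x]) <+: r := prefix_snoc_of_getElem hpre hx
    have h1 := Finset.single_le_sum (f := fun x => if (s ++ [x]) <+: r then D r else 0)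
      (fun i _ => zero_le) (hQ x hQx)
    simpa only [if_pos hx'] using h1
  · exact zero_le

lemma proper_le (D : PMF (List ℕ)) (s : List ℕ) (cur : Finset ℕ) :
    prefProb D s - D s ≤
      prEvent D (fun r => s <+: r ∧ ∃ x, r[s.length]? = some x ∧ x ∉ cur)
        + ∑ x ∈ cur, prefProb D (s ++ [x]) := by
  rw [tsub_le_iff_right]
  have hrhs : prEvent D (fun r => s <+: r ∧ ∃ x, r[s.length]? = some x ∧ x ∉ cur)
        + ∑ x ∈ cur, prefProb D (s ++ [x]) + D s
      = ∑' r, ((if (s <+: r ∧ ∃ x, r[s.length]? = some x ∧ x ∉ cur) then D r else 0)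
          + ((∑ x ∈ cur, if (s ++ [x]) <+: r then D r else 0)
          + (if r = s then D r else 0))) := by
    have hds : ∑' (r : List ℕ), (if r = s then D r else 0) = D s := by
      rw [show (fun r => if r = s then D r else 0) = fun r => if r = s then D s else 0 by
        funext r; split <;> simp_all]
      exact tsum_ite_eq s (fun _ => D s)
    rw [ENNReal.tsum_add, ENNReal.tsum_add,
      Summable.tsum_finsetSum (s := cur) (fun i _ => ENNReal.summable), hds, prEvent]
    simp only [prefProb]
    ring
  rw [prefProb, hrhs]
  refine Summable.tsum_le_tsum (fun r => ?_) ENNReal.summable ENNReal.summable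
  split
  · rename_i hpre
    by_cases hrs : r = s
    · have h0 : D r ≤ (if r = s then D r else 0) := by rw [if_pos hrs]
      exact le_trans h0 (le_trans (self_le_add_left _ _) (self_le_add_left _ _))
    · obtain ⟨x, hx, hx'⟩ := exists_getElem_of_proper hpre hrs
      by_cases hxc : x ∈ cur
      · have h1 : D r ≤ ∑ x ∈ cur, if (s ++ [x]) <+: r then D r else 0 := by
          have h2 := Finset.single_le_sum (f := fun x => if (s ++ [x]) <+: r then D r else 0)
            (fun i _ => zero_le) hxc
          simpa only [if_pos hx'] using h2
        exact le_trans h1 (le_trans (self_le_add_right _ _) (self_le_add_left _ _))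
      · have h1 : D r ≤ (if (s <+: r ∧ ∃ x, r[s.length]? = some x ∧ x ∉ cur) then D r
            else 0) := by rw [if_pos ⟨hpre, x, hx, hxc⟩]
        exact le_trans h1 (self_le_add_right _ _)
  · exact zero_le

end Probability

/-- Let `A` be a lazy deterministic marking algorithm with cache size
`k`, let `D ∈ Δ_ε`, and suppose every phase of every sequence in the support of `D` has
`k` non-redundant (distinct) requests. Fix `ℓ ≥ 1`, `1 ≤ i ≤ k-1`, and a sequence `s`
with `ℓ` phases whose last phase has exactly `i` non-redundant (distinct) requests. Then
the probability that the `(i+1)`st non-redundant request of the `ℓ`th phase of `r` is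
worrisome, conditioned on the prefix of `r` preceding that request being `s`, is at most
`w / max{1, ε⁻¹ - i}` where `w` is the number of new requests in the `ℓ`th phase of `s`.
(Conditioning on the prefix being `s` is the event that `s` is a prefix of `r` and the
request of `r` at position `|s|` is non-redundant; the conditional bound is stated
multiplicatively.) -/
theorem worrisome_prob_bound (k : ℕ) (hk : 1 ≤ k) (ε : ℝ) (hε : 0 < ε)
    (A : LazyMarkingAlg ℕ k) (D : PMF (List ℕ)) (hD : memDelta (ENNReal.ofReal ε) D)
    (hfull : ∀ r ∈ D.support, ∀ p ∈ phases k r, p.toFinset.card = k)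
    (ℓ i : ℕ) (hℓ : 1 ≤ ℓ) (hi1 : 1 ≤ i) (hik : i ≤ k - 1)
    (s : List ℕ) (hsℓ : (phases k s).length = ℓ)
    (hsi : ((phases k s).getD (ℓ - 1) []).toFinset.card = i) :
    prEvent D (fun r => s <+: r ∧ ∃ x, r[s.length]? = some x ∧ x ∉ (pstate k s).2 ∧
        IsWorrisomeReq k s (A.cache s) x) ≤
      ENNReal.ofReal ((newInPh k s ℓ : ℝ) / max 1 (ε⁻¹ - (i : ℝ))) *
        prEvent D (fun r => s <+: r ∧ ∃ x, r[s.length]? = some x ∧ x ∉ (pstate k s).2) := by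
  classical
  have hsne : s ≠ [] := by
    intro h
    rw [h] at hsℓ
    simp [phases, pfold] at hsℓ
    omega
  obtain ⟨hnewEq, hcurEq⟩ := newInPh_corr k s hsne
  rw [hsℓ] at hnewEq hcurEq
  obtain ⟨hcard, hsub, hmark, hcount⟩ := main_inv k hk A s
  have hicur : (pstate k s).2.card = i := by
    rw [pstate_eq]
    rw [hcurEq] at hsi
    simpa using hsi
  set W : Finset ℕ := (pstate k s).1 \ A.cache s with hWdef
  have hWn : ∀ x, (x ∉ (pstate k s).2 ∧ IsWorrisomeReq k s (A.cache s) x) → x ∈ W := by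
    rintro x ⟨hx2, hnew, hxc⟩
    rw [IsNewReq] at hnew
    push_neg at hnew
    exact Finset.mem_sdiff.2 ⟨(hnew hx2).1, hxc⟩
  have hWcard : W.card ≤ newInPh k s ℓ := by rw [hnewEq]; exact hcount
  set E := prefProb D s - D s with hEdef
  set PrA := prEvent D (fun r => s <+: r ∧ ∃ x, r[s.length]? = some x ∧ x ∉ (pstate k s).2 ∧
      IsWorrisomeReq k s (A.cache s) x) with hPrA
  set PrB := prEvent D (fun r => s <+: r ∧ ∃ x, r[s.length]? = some x ∧ x ∉ (pstate k s).2)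
    with hPrB
  have hA_le : PrA ≤ ∑ x ∈ W, prefProb D (s ++ [x]) :=
    prEvent_le_sum D s (fun x => x ∉ (pstate k s).2 ∧ IsWorrisomeReq k s (A.cache s) x) W hWn
  -- dispose of the case w = 0
  by_cases hw0 : newInPh k s ℓ = 0
  · have hWe : W = ∅ := Finset.card_eq_zero.1 (Nat.le_zero.1 (hw0 ▸ hWcard))
    rw [hWe, Finset.sum_empty] at hA_le
    exact le_trans hA_le (zero_le)
  have hw1 : 1 ≤ newInPh k s ℓ := Nat.one_le_iff_ne_zero.2 hw0
  have hAB : PrA ≤ PrB := by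
    refine prEvent_mono D (fun r hE => ?_)
    obtain ⟨h1, x, h2, h3, _⟩ := hE
    exact ⟨h1, x, h2, h3⟩
  have hEtop : E ≠ ⊤ :=
    (lt_of_le_of_lt (le_trans tsub_le_self (prefProb_le_one D s)) ENNReal.one_lt_top).ne
  have hA3 : PrA ≤ (newInPh k s ℓ : ℝ≥0∞) * (ENNReal.ofReal ε * E) := by
    refine le_trans hA_le ?_
    calc ∑ x ∈ W, prefProb D (s ++ [x])
        ≤ ∑ _x ∈ W, ENNReal.ofReal ε * E := Finset.sum_le_sum (fun x _ => hD s x)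
      _ = (W.card : ℝ≥0∞) * (ENNReal.ofReal ε * E) := by
          rw [Finset.sum_const, nsmul_eq_mul]
      _ ≤ (newInPh k s ℓ : ℝ≥0∞) * (ENNReal.ofReal ε * E) := by
          exact mul_le_mul_left (Nat.cast_le.2 hWcard) _
  have hBlow : E ≤ PrB + ENNReal.ofReal ((i : ℝ) * ε) * E := by
    have h1 := proper_le D s (pstate k s).2
    have h2 : ∑ x ∈ (pstate k s).2, prefProb D (s ++ [x])
        ≤ ENNReal.ofReal ((i : ℝ) * ε) * E := by
      calc ∑ x ∈ (pstate k s).2, prefProb D (s ++ [x])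
          ≤ ∑ _x ∈ (pstate k s).2, ENNReal.ofReal ε * E :=
            Finset.sum_le_sum (fun x _ => hD s x)
        _ = ((pstate k s).2.card : ℝ≥0∞) * (ENNReal.ofReal ε * E) := by
            rw [Finset.sum_const, nsmul_eq_mul]
        _ = ENNReal.ofReal ((i : ℝ) * ε) * E := by
            rw [hicur, ENNReal.ofReal_mul (by positivity), ENNReal.ofReal_natCast, mul_assoc]
    exact le_trans h1 (add_le_add_right h2 _)
  rcases max_cases (1 : ℝ) (ε⁻¹ - (i : ℝ)) with ⟨hmax, hle⟩ | ⟨hmax, hlt⟩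
  · rw [hmax, div_one, ENNReal.ofReal_natCast]
    exact le_trans hAB (le_mul_of_one_le_left (zero_le) (by exact_mod_cast hw1))
  · rw [hmax]
    have hβ : 0 < 1 - (i : ℝ) * ε := by
      have h1 : ε * (1 + (i : ℝ)) < ε * ε⁻¹ := by
        apply mul_lt_mul_of_pos_left (by linarith) hε
      rw [mul_inv_cancel₀ hε.ne'] at h1
      nlinarith
    have hsubE : ENNReal.ofReal (1 - (i : ℝ) * ε) * E ≤ PrB := by
      have e1 : ENNReal.ofReal (1 - (i : ℝ) * ε) * E
          = 1 * E - ENNReal.ofReal ((i : ℝ) * ε) * E := by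
        rw [← ENNReal.sub_mul (fun _ _ => hEtop),
          ENNReal.ofReal_sub _ (by positivity), ENNReal.ofReal_one]
      rw [e1, one_mul, tsub_le_iff_right]
      exact hBlow
    have hwεβ : (newInPh k s ℓ : ℝ) / (ε⁻¹ - (i : ℝ))
        = (newInPh k s ℓ : ℝ) * ε / (1 - (i : ℝ) * ε) := by
      rw [show ε⁻¹ - (i : ℝ) = (1 - (i : ℝ) * ε) / ε by field_simp,
        div_div_eq_mul_div]
    rw [hwεβ]
    calc PrA ≤ (newInPh k s ℓ : ℝ≥0∞) * (ENNReal.ofReal ε * E) := hA3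
      _ = ENNReal.ofReal ((newInPh k s ℓ : ℝ) * ε) * E := by
          rw [ENNReal.ofReal_mul (by positivity), ENNReal.ofReal_natCast, mul_assoc]
      _ = ENNReal.ofReal ((newInPh k s ℓ : ℝ) * ε / (1 - (i : ℝ) * ε) * (1 - (i : ℝ) * ε))
            * E := by rw [div_mul_cancel₀ _ hβ.ne']
      _ = ENNReal.ofReal ((newInPh k s ℓ : ℝ) * ε / (1 - (i : ℝ) * ε))
            * (ENNReal.ofReal (1 - (i : ℝ) * ε) * E) := by
          rw [← mul_assoc, ← ENNReal.ofReal_mul (by positivity)]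
      _ ≤ ENNReal.ofReal ((newInPh k s ℓ : ℝ) * ε / (1 - (i : ℝ) * ε)) * PrB :=
          mul_le_mul_right hsubE _

end Paging
end

section
/- For every integer k ≥ 1 and every real δ with 0 < δ < 1, one has Φ((1−δ)/k, k) ≤ 1 + ln(1/δ). -/
/-!
Arithmetic facts about Φ(ε,k) = 1 + ∑_{i=1}^{k-1} 1 / max{ε⁻¹ - i, 1}
and the harmonic numbers H(m) = ∑_{i=1}^m 1/i.
-/

namespace Paging

/-- `Φ(ε,k) = 1 + ∑_{i=1}^{k-1} 1 / max{ε⁻¹ - i, 1}`. -/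
noncomputable def Phi (ε : ℝ) (k : ℕ) : ℝ :=
  1 + ∑ i ∈ Finset.Ico 1 k, 1 / max (ε⁻¹ - (i : ℝ)) 1

/-- The harmonic number `H(m) = ∑_{i=1}^m 1/i` (with `H(0) = 0`). -/
noncomputable def Hharm (m : ℕ) : ℝ :=
  ∑ i ∈ Finset.Icc 1 m, 1 / (i : ℝ)

lemma aux_one_div_le_log_sub (x : ℝ) (hx : 1 < x) :
    1 / x ≤ Real.log x - Real.log (x - 1) := by
  have hx0 : (0:ℝ) < x := by linarith
  have hx1 : (0:ℝ) < x - 1 := by linarith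
  have h := Real.log_le_sub_one_of_pos (show (0:ℝ) < (x - 1) / x by positivity)
  rw [Real.log_div (by linarith) (by linarith)] at h
  have h2 : (x - 1) / x - 1 = -(1 / x) := by field_simp; ring
  rw [h2] at h
  linarith

/-- for `k ≥ 1` and `0 < δ < 1`, `Φ((1-δ)/k, k) ≤ 1 + ln(1/δ)`. -/
theorem phi_below_threshold (k : ℕ) (hk : 1 ≤ k) (δ : ℝ) (hδ0 : 0 < δ) (hδ1 : δ < 1) :
    Phi ((1 - δ) / (k : ℝ)) k ≤ 1 + Real.log (1 / δ) := by
  have hk1 : (1:ℝ) ≤ (k:ℝ) := by exact_mod_cast hk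
  have h1δ : (0:ℝ) < 1 - δ := by linarith
  have hkpos : (0:ℝ) < (k:ℝ) := by linarith
  set c : ℝ := (k : ℝ) / (1 - δ) with hc
  have hck2 : c * (1 - δ) = (k:ℝ) := by
    rw [hc]; field_simp
  have hinv : ((1 - δ) / (k:ℝ))⁻¹ = c := by
    rw [hc, inv_div]
  have hck : (k:ℝ) < c := by
    rw [hc, lt_div_iff₀ h1δ]; nlinarith
  -- each term bounds by a telescoping log difference
  have hterm : ∀ i ∈ Finset.Ico 1 k,
      1 / max (((1 - δ) / (k:ℝ))⁻¹ - (i:ℝ)) 1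
        ≤ (-(Real.log (c - ((i+1 : ℕ):ℝ)))) - (-(Real.log (c - ((i:ℕ):ℝ)))) := by
    intro i hi
    rw [Finset.mem_Ico] at hi
    have hik : (i:ℝ) ≤ (k:ℝ) - 1 := by
      have : (i:ℝ) + 1 ≤ (k:ℝ) := by exact_mod_cast hi.2
      linarith
    have hgt : 1 < c - (i:ℝ) := by linarith
    have hmax : max (c - (i:ℝ)) 1 = c - (i:ℝ) := max_eq_left (le_of_lt hgt)
    rw [hinv, hmax]
    have := aux_one_div_le_log_sub (c - (i:ℝ)) hgt
    have hcast : c - ((i+1 : ℕ):ℝ) = (c - (i:ℝ)) - 1 := by push_cast; ring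
    rw [hcast]
    linarith
  have hsum := Finset.sum_le_sum hterm
  have htel : ∑ i ∈ Finset.Ico 1 k,
      ((-(Real.log (c - ((i+1 : ℕ):ℝ)))) - (-(Real.log (c - ((i:ℕ):ℝ)))))
      = (-(Real.log (c - (k:ℝ)))) - (-(Real.log (c - (1:ℝ)))) := by
    rw [Finset.sum_Ico_eq_sub _ hk,
      Finset.sum_range_sub (f := fun i : ℕ => -(Real.log (c - (i:ℝ)))),
      Finset.sum_range_sub (f := fun i : ℕ => -(Real.log (c - (i:ℝ))))]
    norm_num
  rw [htel] at hsum
  have hck0 : (0:ℝ) < c - (k:ℝ) := by linarith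
  have hc10 : (0:ℝ) < c - 1 := by linarith
  have hlog : Real.log (c - 1) ≤ Real.log (1 / δ * (c - (k:ℝ))) := by
    apply Real.log_le_log hc10
    have hδc : δ * (1 / δ * (c - (k:ℝ))) = c - (k:ℝ) := by field_simp
    nlinarith [hck2, hδc]
  rw [Real.log_mul (by positivity) (by positivity)] at hlog
  have hfinal : ∑ i ∈ Finset.Ico 1 k, 1 / max (((1 - δ) / (k:ℝ))⁻¹ - (i:ℝ)) 1
      ≤ Real.log (1 / δ) := by linarith
  unfold Phi
  linarith
end Paging
end

section
/- For every integer k ≥ 1 and every real δ > 0, one has Φ((1+δ)/k, k) ≥ kδ/(1+δ). -/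
/-!
Write `t = ε⁻¹`. Every term `1 / max (t - i) 1` is nonnegative, and it equals `1` as soon as
`i ≥ t - 1`. Hence `Φ(ε, k + 1) = Φ(ε, k) + 1` once `k > t`, while `Φ(ε, k) ≥ 1` always, so by
induction `Φ(ε, k) ≥ k - t`. For `ε = (1 + δ)/k` this is `k - k/(1 + δ) = kδ/(1 + δ)`.
-/

namespace Paging

theorem one_le_phi (ε : ℝ) (k : ℕ) : 1 ≤ Phi ε k := by
  refine le_add_of_nonneg_right (Finset.sum_nonneg fun i _ => ?_)
  have : (0 : ℝ) < max (ε⁻¹ - i) 1 := lt_max_of_lt_right one_pos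
  positivity

theorem phi_succ (ε : ℝ) {k : ℕ} (hk : 1 ≤ k) :
    Phi ε (k + 1) = Phi ε k + 1 / max (ε⁻¹ - k) 1 := by
  rw [Phi, Phi, Finset.sum_Ico_succ_top hk, add_assoc]

theorem natCast_sub_inv_le_phi {ε : ℝ} (hε : 0 ≤ ε) (k : ℕ) : (k : ℝ) - ε⁻¹ ≤ Phi ε k := by
  have hinv : 0 ≤ ε⁻¹ := inv_nonneg.mpr hε
  induction k with
  | zero => linarith [one_le_phi ε 0]
  | succ k ih =>
    rcases le_or_gt (k : ℝ) ε⁻¹ with hkt | htk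
    · push_cast
      linarith [one_le_phi ε (k + 1)]
    · have hk : 1 ≤ k := by exact_mod_cast (hinv.trans_lt htk)
      have hterm : 1 / max (ε⁻¹ - k) 1 = 1 := by
        rw [max_eq_right (by linarith), div_one]
      rw [phi_succ ε hk, hterm]
      push_cast
      linarith

theorem phi_above_threshold_general (k : ℕ) (δ : ℝ) (hδ : 0 < δ) :
    (k : ℝ) * δ / (1 + δ) ≤ Phi ((1 + δ) / (k : ℝ)) k := by
  have hδ1 : (1 : ℝ) + δ ≠ 0 := by positivity
  have hthreshold : (k : ℝ) * δ / (1 + δ) = k - ((1 + δ) / k)⁻¹ := by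
    rw [inv_div]
    field_simp
    ring
  rw [hthreshold]
  exact natCast_sub_inv_le_phi (by positivity) k

/-- for `k ≥ 1` and `δ > 0`, `Φ((1+δ)/k, k) ≥ kδ/(1+δ)`. -/
theorem phi_above_threshold (k : ℕ) (hk : 1 ≤ k) (δ : ℝ) (hδ : 0 < δ) :
    (k : ℝ) * δ / (1 + δ) ≤ Phi ((1 + δ) / (k : ℝ)) k :=
  phi_above_threshold_general k δ hδ

end Paging
end
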